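/- arXiv:1404.4941 — 3 statements merged into one kernel-verified Lean document; each statement's English description precedes it below -/
import Mathlib

section
/- Let H be a Hopf algebra over a field k. The algebra C_H of right H_ab-coinvariants of S(t_H)_Θ is a localization of the subalgebra S(t_H)^{co-H_ab} of right H_ab-coinvariants of S(t_H); that is, every element of C_H becomes an element of S(t_H)^{co-H_ab} after multiplication by a suitable invertible element of S(t_H)^{co-H_ab}, and C_H is obtained from S(t_H)^{co-H_ab} by inverting such elements. -/
open TensorProduct

noncomputable section

/-- A submodule `S` of a coalgebra `C` is a subcoalgebra if `Δ(S) ⊆ S ⊗ S`. -/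
def IsSubcoalg (k : Type*) [Field k] {C : Type*} [AddCommGroup C] [Module k C] [Coalgebra k C]
    (S : Submodule k C) : Prop :=
  ∀ x ∈ S, Coalgebra.comul (R := k) x ∈
    LinearMap.range (TensorProduct.map S.subtype S.subtype)

/-- A coalgebra is pointed if every simple subcoalgebra is one-dimensional. -/
def IsPointedCoalg (k C : Type*) [Field k] [AddCommGroup C] [Module k C] [Coalgebra k C] : Prop :=
  ∀ S : Submodule k C, IsSubcoalg k S → S ≠ ⊥ →
    (∀ T : Submodule k C, IsSubcoalg k T → T < S → T = ⊥) →
    Module.finrank k S = 1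

/-- A group-like element: `ε(g) = 1` and `Δ(g) = g ⊗ g`. -/
def IsGpLike (k : Type*) [Field k] {C : Type*} [AddCommGroup C] [Module k C] [Coalgebra k C]
    (g : C) : Prop :=
  Coalgebra.counit (R := k) g = 1 ∧ Coalgebra.comul (R := k) g = g ⊗ₜ[k] g

/-- Data exhibiting `A` as the free commutative Hopf algebra `S(t_C)_Θ` on a coalgebra `C`. -/
structure FreeCommHopfData (k : Type*) [Field k] (C : Type*) [AddCommGroup C] [Module k C]
    [Coalgebra k C] (A : Type*) [CommRing A] [HopfAlgebra k A] where
  t : C →ₗ[k] A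
  tinv : C →ₗ[k] A
  comul_t : ∀ x : C, Coalgebra.comul (R := k) (t x) = TensorProduct.map t t (Coalgebra.comul x)
  comul_tinv : ∀ x : C, Coalgebra.comul (R := k) (tinv x)
      = TensorProduct.map tinv tinv (TensorProduct.comm k C C (Coalgebra.comul (R := k) x))
  counit_t : ∀ x : C, Coalgebra.counit (R := k) (t x) = Coalgebra.counit (R := k) x
  counit_tinv : ∀ x : C, Coalgebra.counit (R := k) (tinv x) = Coalgebra.counit (R := k) x
  mul_t_tinv : ∀ x : C, LinearMap.mul' k A (TensorProduct.map t tinv (Coalgebra.comul (R := k) x))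
      = Coalgebra.counit (R := k) x • (1 : A)
  mul_tinv_t : ∀ x : C, LinearMap.mul' k A (TensorProduct.map tinv t (Coalgebra.comul (R := k) x))
      = Coalgebra.counit (R := k) x • (1 : A)
  antipode_t : ∀ x : C, HopfAlgebra.antipode (R := k) (t x) = tinv x
  antipode_tinv : ∀ x : C, HopfAlgebra.antipode (R := k) (tinv x) = t x
  injective_t : Function.Injective t
  isDomain : IsDomain A
  adjoin_eq_top : Algebra.adjoin k (Set.range t ∪ Set.range tinv) = ⊤
  universal : ∀ {A' : Type*} [CommRing A'] [HopfAlgebra k A'] (f : C →ₗ[k] A'),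
      (∀ x : C, Coalgebra.comul (R := k) (f x) = TensorProduct.map f f (Coalgebra.comul (R := k) x)) →
      (∀ x : C, Coalgebra.counit (R := k) (f x) = Coalgebra.counit (R := k) x) →
      ∃! φ : A →ₐc[k] A', ∀ x : C, φ (t x) = f x

/-- Data exhibiting `Hab` as the largest commutative Hopf algebra quotient of `H`. -/
structure HabData (k : Type*) [Field k] (H : Type*) [Ring H] [HopfAlgebra k H]
    (Hab : Type*) [CommRing Hab] [HopfAlgebra k Hab] where
  q : H →ₐc[k] Hab
  surjective_q : Function.Surjective q
  universal : ∀ {B : Type*} [CommRing B] [HopfAlgebra k B] (f : H →ₐc[k] B),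
      ∃! g : Hab →ₐc[k] B, ∀ x : H, g (q x) = f x

variable {k : Type*} [Field k]

section Generic

variable {H : Type*} [Ring H] [HopfAlgebra k H] {A : Type*} [CommRing A] [HopfAlgebra k A]

/-- σ(x,y) = t_{x₁} t_{y₁} t⁻¹_{x₂ y₂}. -/
def sigmaElem (F : FreeCommHopfData k H A) (x y : H) : A :=
  (LinearMap.mul' k A).comp
    ((TensorProduct.map (LinearMap.mul' k A) LinearMap.id).comp
      ((TensorProduct.map (TensorProduct.map F.t F.t) (F.tinv.comp (LinearMap.mul' k H))).comp
        (TensorProduct.tensorTensorTensorComm k H H H H).toLinearMap))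
    ((Coalgebra.comul (R := k) x) ⊗ₜ[k] (Coalgebra.comul (R := k) y))

/-- σ⁻¹(x,y) = t_{x₁ y₁} t⁻¹_{x₂} t⁻¹_{y₂}. -/
def sigmaInvElem (F : FreeCommHopfData k H A) (x y : H) : A :=
  (LinearMap.mul' k A).comp
    ((TensorProduct.map LinearMap.id (LinearMap.mul' k A)).comp
      ((TensorProduct.map (F.t.comp (LinearMap.mul' k H)) (TensorProduct.map F.tinv F.tinv)).comp
        (TensorProduct.tensorTensorTensorComm k H H H H).toLinearMap))
    ((Coalgebra.comul (R := k) x) ⊗ₜ[k] (Coalgebra.comul (R := k) y))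

/-- The generic base algebra B_H. -/
def genericBase (F : FreeCommHopfData k H A) : Subalgebra k A :=
  Algebra.adjoin k ({a | ∃ x y : H, a = sigmaElem F x y} ∪ {a | ∃ x y : H, a = sigmaInvElem F x y})

/-- The coaction δ_S = (id ⊗ q̃) ∘ Δ of H_ab on S(t_H)_Θ, as an algebra map. -/
def coactS {Hab : Type*} [CommRing Hab] [HopfAlgebra k Hab] (qt : A →ₐc[k] Hab) :
    A →ₐ[k] A ⊗[k] Hab :=
  (Algebra.TensorProduct.map (AlgHom.id k A) (qt : A →ₐ[k] Hab)).comp (Bialgebra.comulAlgHom k A)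

/-- The subalgebra C_H of right H_ab-coinvariants of S(t_H)_Θ. -/
def coinvCH {Hab : Type*} [CommRing Hab] [HopfAlgebra k Hab] (qt : A →ₐc[k] Hab) :
    Subalgebra k A :=
  AlgHom.equalizer (coactS qt) Algebra.TensorProduct.includeLeft

end Generic

/-- `B` is a localization of `A` (inside an ambient commutative ring `R`): `A ⊆ B`, and `B` is
obtained from `A` by inverting a multiplicative subset of `A`. -/
def IsLocalizationOfSet {R : Type*} [CommRing R] (A B : Set R) : Prop :=
  A ⊆ B ∧ ∃ M : Submonoid R, (M : Set R) ⊆ A ∧ (∀ m ∈ M, ∃ b ∈ B, m * b = 1) ∧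
    ∀ b ∈ B, ∃ m ∈ M, b * m ∈ A


section PI

variable {H : Type*} [Ring H] [HopfAlgebra k H] {A : Type*} [CommRing A] [HopfAlgebra k A]

/-- The coaction δ_T of H on the tensor algebra T(X_H), with δ_T(X_x) = X_{x₁} ⊗ x₂. -/
def coactT (k : Type*) [Field k] (H : Type*) [Ring H] [HopfAlgebra k H] :
    TensorAlgebra k H →ₐ[k] TensorAlgebra k H ⊗[k] H :=
  TensorAlgebra.lift k
    ((TensorProduct.map (TensorAlgebra.ι k) LinearMap.id).comp
      (Coalgebra.comul (R := k) (A := H)))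

/-- The universal comodule algebra map μ : T(X_H) → S(t_H) ⊗ H, μ(X_x) = t_{x₁} ⊗ x₂. -/
def muMap (F : FreeCommHopfData k H A) : TensorAlgebra k H →ₐ[k] A ⊗[k] H :=
  TensorAlgebra.lift k
    ((TensorProduct.map F.t LinearMap.id).comp (Coalgebra.comul (R := k) (A := H)))

/-- p_x = t_{x₁} t_{S(x₂)}, as a linear function of x. -/
def pMap (F : FreeCommHopfData k H A) : H →ₗ[k] A :=
  (LinearMap.mul' k A).comp
    ((TensorProduct.map F.t (F.t.comp (HopfAlgebra.antipode (R := k)))).comp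
      (Coalgebra.comul (R := k)))

/-- q_{x,y} = t_{x₁} t_{y₁} t_{S(x₂ y₂)}, as a linear function of x ⊗ y. -/
def qMap (F : FreeCommHopfData k H A) : H ⊗[k] H →ₗ[k] A :=
  ((LinearMap.mul' k A).comp
    ((TensorProduct.map (LinearMap.mul' k A) LinearMap.id).comp
      ((TensorProduct.map (TensorProduct.map F.t F.t)
          ((F.t.comp ((HopfAlgebra.antipode (R := k)).comp (LinearMap.mul' k H))))).comp
        (TensorProduct.tensorTensorTensorComm k H H H H).toLinearMap))).comp
    (TensorProduct.map (Coalgebra.comul (R := k)) (Coalgebra.comul (R := k)))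

/-- P_x = X_{x₁} X_{S(x₂)} in the tensor algebra. -/
def PElem (k : Type*) [Field k] {H : Type*} [Ring H] [HopfAlgebra k H] (x : H) :
    TensorAlgebra k H :=
  (LinearMap.mul' k (TensorAlgebra k H))
    ((TensorProduct.map (TensorAlgebra.ι k)
      ((TensorAlgebra.ι k).comp (HopfAlgebra.antipode (R := k)))) (Coalgebra.comul (R := k) x))

/-- Q_{x,y} = X_{x₁} X_{y₁} X_{S(x₂ y₂)} in the tensor algebra. -/
def QElem (k : Type*) [Field k] {H : Type*} [Ring H] [HopfAlgebra k H] (x y : H) :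
    TensorAlgebra k H :=
  (LinearMap.mul' k (TensorAlgebra k H))
    ((TensorProduct.map (LinearMap.mul' k (TensorAlgebra k H)) LinearMap.id)
      ((TensorProduct.map (TensorProduct.map (TensorAlgebra.ι k) (TensorAlgebra.ι k))
          ((TensorAlgebra.ι k).comp ((HopfAlgebra.antipode (R := k)).comp (LinearMap.mul' k H))))
        ((TensorProduct.tensorTensorTensorComm k H H H H)
          ((Coalgebra.comul (R := k) x) ⊗ₜ[k] (Coalgebra.comul (R := k) y)))))

/-- μ̄(V_H): the image in S(t_H) ⊆ A of the coinvariants of the universal comodule algebra. -/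
def VHSet (F : FreeCommHopfData k H A) : Set A :=
  {a : A | ∃ u : TensorAlgebra k H, muMap F u = a ⊗ₜ[k] 1}

/-- `a` is a monomial of degree ≤ m (and ≥ 1) in the t-variables. -/
def IsTMonomialLe (F : FreeCommHopfData k H A) (m : ℕ) (a : A) : Prop :=
  ∃ d : ℕ, 1 ≤ d ∧ d ≤ m ∧ ∃ f : Fin d → H, a = ∏ j, F.t (f j)

/-- `a` is a monomial of degree ≤ m in the variables t_g, g group-like. -/
def IsTGpMonomialLe (F : FreeCommHopfData k H A) (m : ℕ) (a : A) : Prop :=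
  ∃ d : ℕ, 1 ≤ d ∧ d ≤ m ∧ ∃ f : Fin d → H, (∀ j, IsGpLike k (f j)) ∧ a = ∏ j, F.t (f j)

end PI

/-- Data exhibiting `H` as the Hopf algebra O_k(G) of k-valued functions on a finite group `G`. -/
structure FunAlgData (k : Type*) [Field k] (G : Type*) [Group G] [Fintype G] [DecidableEq G]
    (H : Type*) [CommRing H] [HopfAlgebra k H] where
  e : Module.Basis G k H
  mul_e : ∀ g h : G, e g * e h = if g = h then e g else 0
  sum_e : ∑ g : G, e g = 1
  comul_e : ∀ g : G, Coalgebra.comul (R := k) (e g) = ∑ h : G, e (g * h⁻¹) ⊗ₜ[k] e h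
  counit_e : ∀ g : G, Coalgebra.counit (R := k) (e g) = if g = 1 then (1 : k) else 0
  antipode_e : ∀ g : G, HopfAlgebra.antipode (R := k) (e g) = e g⁻¹



/-!
By the fundamental theorem of coalgebras every `y ∈ H` lies in the span of the entries of a
comatrix `d` (`Δ dᵢⱼ = ∑ₗ dᵢₗ ⊗ dₗⱼ`, `ε dᵢⱼ = δᵢⱼ`). The matrices `t(d)` and `t⁻¹(d)` are then
inverse to each other, so `t⁻¹(dᵢⱼ) · det t(d)` is an entry of the adjugate of `t(d)` and lies in
`S(t_H)`. Under `δ_S` the determinant `det t(d)` picks up the group-like `det q(d)`; the comatrix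
`(S d)ᵀ` gives the inverse group-like, so `m = det t(d) · det t((S d)ᵀ)` is a coinvariant of
`S(t_H)` that is invertible in `S(t_H)_Θ`. As `S(t_H)_Θ` is generated by the `t_x` and `t⁻¹_x`,
every element is carried into `S(t_H)` by a product of such `m`, and inverses of coinvariants are
coinvariant.
-/

theorem LinearIndependent.eq_of_sum_tmul_eq {V M ι : Type*} [AddCommGroup V] [Module k V]
    [AddCommGroup M] [Module k M] [Fintype ι] {c : ι → V} (hc : LinearIndependent k c)
    {a a' : ι → M} (h : ∑ i, c i ⊗ₜ[k] a i = ∑ i, c i ⊗ₜ[k] a' i) : a = a' := by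
  classical
  obtain ⟨g, hg⟩ := (Finsupp.linearCombination k c).exists_leftInverse_of_injective
    (LinearMap.ker_eq_bot.mpr hc)
  have hgc : ∀ i, g (c i) = Finsupp.single i 1 := fun i => by
    simpa using LinearMap.congr_fun hg (Finsupp.single i 1)
  funext j
  simpa [hgc, Finsupp.single_apply] using
    congr(TensorProduct.lid k M (((Finsupp.lapply j ∘ₗ g).rTensor M) $h))

structure IsComatrix (R : Type*) [CommSemiring R] {C : Type*} [AddCommMonoid C] [Module R C]
    [Coalgebra R C] {ι : Type*} [Fintype ι] [DecidableEq ι] (d : Matrix ι ι C) : Prop where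
  comul_apply : ∀ i j, Coalgebra.comul (R := R) (d i j) = ∑ l, d i l ⊗ₜ[R] d l j
  counit_apply : ∀ i j, Coalgebra.counit (R := R) (d i j) = (1 : Matrix ι ι R) i j

theorem IsComatrix.map_mul_map_eq_one {R C B ι : Type*} [CommSemiring R] [AddCommMonoid C]
    [Module R C] [Coalgebra R C] [Semiring B] [Algebra R B] [Fintype ι] [DecidableEq ι]
    {d : Matrix ι ι C} (hd : IsComatrix R d) {f g : C →ₗ[R] B}
    (hfg : ∀ x, LinearMap.mul' R B (TensorProduct.map f g (Coalgebra.comul (R := R) x))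
      = Coalgebra.counit (R := R) x • (1 : B)) :
    d.map f * d.map g = 1 := by
  ext i j
  have h := hfg (d i j)
  rw [hd.comul_apply, map_sum, map_sum, hd.counit_apply] at h
  simp only [TensorProduct.map_tmul, LinearMap.mul'_apply] at h
  rw [Matrix.mul_apply]
  simp only [Matrix.map_apply]
  rw [h, Matrix.one_apply, Matrix.one_apply]
  split_ifs <;> simp

section Coalgebra

variable {C : Type*} [AddCommGroup C] [Module k C] [Coalgebra k C]

local notation "Δ" => Coalgebra.comul (R := k) (A := C)

theorem comul_rid_lTensor_comul (φ : C →ₗ[k] k) (y : C) :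
    Δ (TensorProduct.rid k C (φ.lTensor C (Δ y)))
      = (TensorProduct.rid k C ∘ₗ φ.lTensor C ∘ₗ Δ).lTensor C (Δ y) := by
  have slice_comul : ∀ z : C ⊗[k] C, Δ (TensorProduct.rid k C (φ.lTensor C z))
      = TensorProduct.rid k (C ⊗[k] C) (φ.lTensor (C ⊗[k] C) (LinearMap.rTensor C Δ z)) := by
    intro z
    induction z using TensorProduct.induction_on with
    | zero => simp
    | tmul a b => simp
    | add z z' hz hz' => simp only [map_add, hz, hz']
  have slice_assoc : ∀ z : C ⊗[k] (C ⊗[k] C),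
      TensorProduct.rid k (C ⊗[k] C) (φ.lTensor (C ⊗[k] C) ((TensorProduct.assoc k C C C).symm z))
        = (TensorProduct.rid k C ∘ₗ φ.lTensor C).lTensor C z := by
    intro z
    induction z using TensorProduct.induction_on with
    | zero => simp
    | tmul a bc =>
        induction bc using TensorProduct.induction_on with
        | zero => simp
        | tmul b c => simp [TensorProduct.tmul_smul]
        | add z z' hz hz' => simp only [TensorProduct.tmul_add, map_add, hz, hz']
    | add z z' hz hz' => simp only [map_add, hz, hz']
  rw [slice_comul, ← Coalgebra.coassoc_symm_apply, slice_assoc, ← LinearMap.comp_apply,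
    ← LinearMap.lTensor_comp, LinearMap.comp_assoc]

theorem exists_finiteDimensional_mem_comul_mem_range (y : C) :
    ∃ V : Submodule k C, FiniteDimensional k V ∧ y ∈ V ∧
      ∀ v ∈ V, Δ v ∈ LinearMap.range (V.subtype.rTensor C) := by
  classical
  let b := Module.Basis.ofVectorSpace k C
  let w := TensorProduct.equivFinsuppOfBasisRight b (Δ y)
  have hΔy : Δ y = ∑ s ∈ w.support, w s ⊗ₜ[k] b s := by
    have h := (TensorProduct.equivFinsuppOfBasisRight b).symm_apply_apply (Δ y)
    rw [TensorProduct.equivFinsuppOfBasisRight_symm_apply] at h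
    exact h.symm
  let V := Submodule.span k (w.support.image w : Set C)
  have hwV : ∀ s ∈ w.support, w s ∈ V := fun s hs =>
    Submodule.subset_span (Finset.mem_coe.mpr (Finset.mem_image_of_mem w hs))
  refine ⟨V, FiniteDimensional.span_finset k _, ?_, ?_⟩
  · have hy := congr(TensorProduct.rid k C $(Coalgebra.lTensor_counit_comul (R := k) y))
    rw [hΔy] at hy
    simp only [map_sum, LinearMap.lTensor_tmul, TensorProduct.rid_tmul, one_smul] at hy
    rw [← hy]
    exact Submodule.sum_mem _ fun s hs => Submodule.smul_mem _ _ (hwV s hs)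
  · suffices V ≤ (LinearMap.range (V.subtype.rTensor C)).comap Δ from fun v hv => this hv
    rw [Submodule.span_le, Finset.coe_image]
    rintro _ ⟨s, -, rfl⟩
    rw [SetLike.mem_coe, Submodule.mem_comap,
      show w s = _ from TensorProduct.equivFinsuppOfBasisRight_apply b (Δ y) s,
      comul_rid_lTensor_comul, hΔy, map_sum]
    exact Submodule.sum_mem _ fun t ht => ⟨⟨w t, hwV t ht⟩ ⊗ₜ[k] _, rfl⟩

theorem isComatrix_of_comul_eq {ι : Type*} [Fintype ι] [DecidableEq ι] {c : ι → C}
    (hc : LinearIndependent k c) {d : Matrix ι ι C} (hcd : ∀ j, Δ (c j) = ∑ i, c i ⊗ₜ[k] d i j) :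
    IsComatrix k d where
  comul_apply l j := by
    have h := Coalgebra.coassoc_apply (R := k) (c j)
    simp only [hcd, map_sum, LinearMap.rTensor_tmul, LinearMap.lTensor_tmul, TensorProduct.sum_tmul,
      TensorProduct.assoc_tmul] at h
    rw [Finset.sum_comm] at h
    simp only [← TensorProduct.tmul_sum] at h
    exact (congr_fun (hc.eq_of_sum_tmul_eq h) l).symm
  counit_apply i j := by
    have h := Coalgebra.lTensor_counit_comul (R := k) (c j)
    rw [hcd, map_sum] at h
    simp only [LinearMap.lTensor_tmul] at h
    refine congr_fun (hc.eq_of_sum_tmul_eq (a' := fun i => (1 : Matrix ι ι k) i j) (h.trans ?_)) i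
    simp [Matrix.one_apply, apply_ite (TensorProduct.tmul k (c _))]

theorem mem_span_of_comul_eq {ι : Type*} [Fintype ι] {c : ι → C} {d : Matrix ι ι C}
    (hcd : ∀ j, Δ (c j) = ∑ i, c i ⊗ₜ[k] d i j) (j : ι) :
    c j ∈ Submodule.span k (Set.range fun p : ι × ι => d p.1 p.2) := by
  have h := congr(TensorProduct.lid k C $(Coalgebra.rTensor_counit_comul (R := k) (c j)))
  simp only [hcd, map_sum, LinearMap.rTensor_tmul, TensorProduct.lid_tmul, one_smul] at h
  rw [← h]
  exact Submodule.sum_mem _ fun i _ => Submodule.smul_mem _ _ (Submodule.subset_span ⟨(i, j), rfl⟩)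

theorem exists_isComatrix_mem_span (y : C) :
    ∃ (n : ℕ) (d : Matrix (Fin n) (Fin n) C), IsComatrix k d ∧
      y ∈ Submodule.span k (Set.range fun p : Fin n × Fin n => d p.1 p.2) := by
  obtain ⟨V, hV, hyV, hΔV⟩ := exists_finiteDimensional_mem_comul_mem_range (k := k) y
  let bas := Module.finBasis k V
  let c : Fin (Module.finrank k V) → C := fun i => bas i
  have hc : LinearIndependent k c := bas.linearIndependent.map' V.subtype V.ker_subtype
  choose u hu using fun j => LinearMap.mem_range.mp (hΔV (c j) (bas j).2)
  let d : Matrix _ _ C := fun i j => TensorProduct.equivFinsuppOfBasisLeft bas (u j) i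
  have hcd : ∀ j, Δ (c j) = ∑ i, c i ⊗ₜ[k] d i j := by
    intro j
    have h := (TensorProduct.equivFinsuppOfBasisLeft bas).symm_apply_apply (u j)
    rw [TensorProduct.equivFinsuppOfBasisLeft_symm_apply, Finsupp.sum_fintype _ _ (by simp)] at h
    rw [← hu j, ← h, map_sum]
    rfl
  refine ⟨_, d, isComatrix_of_comul_eq hc hcd, ?_⟩
  have hy := congr(V.subtype $(bas.sum_repr ⟨y, hyV⟩))
  simp only [map_sum, map_smul, Submodule.subtype_apply] at hy
  rw [← hy]
  exact Submodule.sum_mem _ fun i _ => Submodule.smul_mem _ _ (mem_span_of_comul_eq hcd i)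

end Coalgebra

namespace IsComatrix

variable {R H ι : Type*} [CommSemiring R] [Semiring H] [HopfAlgebra R H] [Fintype ι]
  [DecidableEq ι] {d : Matrix ι ι H}

local notation "S" => HopfAlgebra.antipode (R := R) (A := H)

theorem mul_map_antipode (hd : IsComatrix R d) : d * d.map S = 1 := by
  simpa using hd.map_mul_map_eq_one (f := LinearMap.id) (g := S) fun x => by
    rw [← Algebra.algebraMap_eq_smul_one]
    exact HopfAlgebra.mul_antipode_lTensor_comul_apply x

theorem map_antipode_mul (hd : IsComatrix R d) : d.map S * d = 1 := by
  simpa using hd.map_mul_map_eq_one (f := S) (g := LinearMap.id) fun x => by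
    rw [← Algebra.algebraMap_eq_smul_one]
    exact HopfAlgebra.mul_antipode_rTensor_comul_apply x

/-- In `Matrix ι ι (H ⊗ H)` the matrix `(Δ dᵢⱼ)` factors as `(dᵢⱼ ⊗ 1) * (1 ⊗ dᵢⱼ)`, and inverting
both factors computes `(Δ (S dᵢⱼ))`. -/
theorem transpose_map_antipode (hd : IsComatrix R d) : IsComatrix R (d.map S).transpose := by
  let Lm := (Algebra.TensorProduct.includeLeft : H →ₐ[R] H ⊗[R] H).mapMatrix (m := ι)
  let Rm := (Algebra.TensorProduct.includeRight : H →ₐ[R] H ⊗[R] H).mapMatrix (m := ι)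
  let Δm := (Bialgebra.comulAlgHom R H).mapMatrix (m := ι)
  have hΔ : Δm d = Lm d * Rm d := by
    ext i j
    simp [Lm, Rm, Δm, Matrix.mul_apply, hd.comul_apply]
  have hinv : (Rm (d.map S) * Lm (d.map S)) * Δm d = 1 := by
    rw [hΔ, mul_assoc, ← mul_assoc (Lm _), ← map_mul, hd.map_antipode_mul, map_one, one_mul,
      ← map_mul, hd.map_antipode_mul, map_one]
  have hΔS : Δm (d.map S) = Rm (d.map S) * Lm (d.map S) :=
    (left_inv_eq_right_inv hinv (by rw [← map_mul, hd.mul_map_antipode, map_one])).symm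
  constructor
  · intro i j
    have h := congr_fun (congr_fun hΔS j) i
    simp only [Δm, Lm, Rm, AlgHom.mapMatrix_apply, Matrix.map_apply, Matrix.mul_apply,
      Bialgebra.comulAlgHom_apply, Algebra.TensorProduct.includeLeft_apply,
      Algebra.TensorProduct.includeRight_apply, Algebra.TensorProduct.tmul_mul_tmul, one_mul,
      mul_one] at h
    simpa using h
  · intro i j
    simp [hd.counit_apply, Matrix.one_apply, eq_comm]

end IsComatrix

theorem Matrix.det_mem_of_forall_mem {ι R S : Type*} [Fintype ι] [DecidableEq ι] [CommRing R]
    [SetLike S R] [SubringClass S R] {s : S} {M : Matrix ι ι R} (h : ∀ i j, M i j ∈ s) :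
    M.det ∈ s := by
  rw [Matrix.det_apply']
  exact sum_mem fun σ _ => mul_mem (intCast_mem _ _) (prod_mem fun i _ => h _ _)

theorem Matrix.adjugate_mem_of_forall_mem {ι R S : Type*} [Fintype ι] [DecidableEq ι] [CommRing R]
    [SetLike S R] [SubringClass S R] {s : S} {M : Matrix ι ι R} (h : ∀ i j, M i j ∈ s)
    (i j : ι) : M.adjugate i j ∈ s := by
  rw [Matrix.adjugate_apply]
  refine Matrix.det_mem_of_forall_mem fun i' j' => ?_
  rw [Matrix.updateRow_apply, Pi.single_apply]
  split_ifs
  exacts [one_mem s, zero_mem s, h _ _]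

theorem AlgHom.mem_equalizer_of_mul_eq_one {R A B : Type*} [CommSemiring R] [CommSemiring A]
    [Algebra R A] [Semiring B] [Algebra R B] {f g : A →ₐ[R] B} {m u : A}
    (hm : m ∈ AlgHom.equalizer f g) (hmu : m * u = 1) : u ∈ AlgHom.equalizer f g := by
  have hm : f m = g m := hm
  show f u = g u
  calc f u = f u * (g m * g u) := by rw [← map_mul, hmu, map_one, mul_one]
    _ = f (u * m) * g u := by rw [map_mul, hm, mul_assoc]
    _ = g u := by rw [mul_comm u, hmu, map_one, one_mul]

theorem Algebra.exists_mul_mem_of_mem_adjoin {R A : Type*} [CommSemiring R] [CommSemiring A]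
    [Algebra R A] {B : Subalgebra R A} {M : Submonoid A} (hM : M ≤ B.toSubmonoid) {s : Set A}
    (hs : ∀ a ∈ s, ∃ m ∈ M, a * m ∈ B) {b : A} (hb : b ∈ Algebra.adjoin R s) :
    ∃ m ∈ M, b * m ∈ B := by
  induction hb using Algebra.adjoin_induction with
  | mem a ha => exact hs a ha
  | algebraMap r => exact ⟨1, M.one_mem, by simp⟩
  | add a a' _ _ ha ha' =>
      obtain ⟨m, hm, ham⟩ := ha
      obtain ⟨m', hm', ham'⟩ := ha'
      refine ⟨m * m', M.mul_mem hm hm', ?_⟩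
      rw [show (a + a') * (m * m') = a * m * m' + a' * m' * m by ring]
      exact add_mem (mul_mem ham (hM hm')) (mul_mem ham' (hM hm))
  | mul a a' _ _ ha ha' =>
      obtain ⟨m, hm, ham⟩ := ha
      obtain ⟨m', hm', ham'⟩ := ha'
      exact ⟨m * m', M.mul_mem hm hm', by rw [mul_mul_mul_comm]; exact mul_mem ham ham'⟩

section FreeCommHopf

variable {H : Type*} [Ring H] [HopfAlgebra k H] {A : Type*} [CommRing A] [HopfAlgebra k A]
  {Hab : Type*} [CommRing Hab] [HopfAlgebra k Hab]
  {F : FreeCommHopfData k H A} {hab : HabData k H Hab} {qt : A →ₐc[k] Hab}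

theorem mem_coinvCH_iff {a : A} : a ∈ coinvCH qt ↔ coactS qt a = a ⊗ₜ[k] 1 :=
  AlgHom.mem_equalizer _ _ _

theorem coactS_t (hqt : ∀ x : H, qt (F.t x) = hab.q x) (x : H) :
    coactS qt (F.t x)
      = TensorProduct.map F.t (hab.q : H →ₗ[k] Hab) (Coalgebra.comul (R := k) x) := by
  simp only [coactS, AlgHom.comp_apply, Bialgebra.comulAlgHom_apply, F.comul_t]
  induction Coalgebra.comul (R := k) x using TensorProduct.induction_on with
  | zero => simp
  | tmul a b => simp [hqt]
  | add z z' hz hz' => simp only [map_add, hz, hz']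

namespace IsComatrix

variable {ι : Type*} [Fintype ι] [DecidableEq ι] {d : Matrix ι ι H}

theorem coactS_det_map_t (hqt : ∀ x : H, qt (F.t x) = hab.q x) (hd : IsComatrix k d) :
    coactS qt (d.map F.t).det = (d.map F.t).det ⊗ₜ[k] (d.map hab.q).det := by
  have hmap : (coactS qt).mapMatrix (d.map F.t)
      = (Algebra.TensorProduct.includeLeft : A →ₐ[k] A ⊗[k] Hab).mapMatrix (d.map F.t)
        * (Algebra.TensorProduct.includeRight : Hab →ₐ[k] A ⊗[k] Hab).mapMatrix (d.map hab.q) := by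
    ext i j
    simp [Matrix.mul_apply, coactS_t hqt, hd.comul_apply]
  rw [AlgHom.map_det, hmap, Matrix.det_mul, ← AlgHom.map_det, ← AlgHom.map_det]
  simp

theorem det_map_t_mul_det_map_tinv (hd : IsComatrix k d) :
    (d.map F.t).det * (d.map F.tinv).det = 1 := by
  rw [← Matrix.det_mul, hd.map_mul_map_eq_one F.mul_t_tinv, Matrix.det_one]

theorem tinv_mul_det_map_t_mem (hd : IsComatrix k d) (i j : ι) :
    F.tinv (d i j) * (d.map F.t).det ∈ Algebra.adjoin k (Set.range F.t) := by
  set T := d.map F.t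
  have hadj : T.adjugate = T.det • d.map F.tinv :=
    calc T.adjugate = T.adjugate * (T * d.map F.tinv) := by
          rw [hd.map_mul_map_eq_one F.mul_t_tinv, mul_one]
      _ = T.det • d.map F.tinv := by rw [← mul_assoc, Matrix.adjugate_mul, Matrix.smul_mul, one_mul]
  have hentry : F.tinv (d i j) * T.det = T.adjugate i j := by
    rw [hadj, Matrix.smul_apply, Matrix.map_apply, smul_eq_mul, mul_comm]
  rw [hentry]
  exact Matrix.adjugate_mem_of_forall_mem
    (fun i j => Algebra.subset_adjoin (Set.mem_range_self (d i j))) i j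

end IsComatrix

variable (F qt) in
def invertibleCoinvariants : Submonoid A :=
  (Algebra.adjoin k (Set.range F.t) ⊓ coinvCH qt).toSubmonoid ⊓ IsUnit.submonoid A

/-- With `d' = (S d)ᵀ`, the group-likes `det q(d)` and `det q(d')` are inverse to each other, so
`det t(d) * det t(d')` is coinvariant. -/
theorem IsComatrix.exists_mem_invertibleCoinvariants {ι : Type*} [Fintype ι] [DecidableEq ι]
    {d : Matrix ι ι H} (hqt : ∀ x : H, qt (F.t x) = hab.q x) (hd : IsComatrix k d) :
    ∃ m ∈ invertibleCoinvariants F qt,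
      ∀ i j, F.tinv (d i j) * m ∈ Algebra.adjoin k (Set.range F.t) := by
  set d' := (d.map (HopfAlgebra.antipode (R := k))).transpose
  have hd' : IsComatrix k d' := hd.transpose_map_antipode
  have hq : (d.map hab.q).det * (d'.map hab.q).det = 1 := by
    rw [Matrix.transpose_map, Matrix.det_transpose, ← Matrix.det_mul, ← Matrix.map_mul,
      hd.mul_map_antipode, Matrix.map_one _ (map_zero _) (map_one _), Matrix.det_one]
  refine ⟨(d.map F.t).det * (d'.map F.t).det, ⟨⟨?_, ?_⟩, ?_⟩, fun i j => ?_⟩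
  · exact mul_mem (Matrix.det_mem_of_forall_mem fun i j => Algebra.subset_adjoin ⟨_, rfl⟩)
      (Matrix.det_mem_of_forall_mem fun i j => Algebra.subset_adjoin ⟨_, rfl⟩)
  · refine mem_coinvCH_iff.mpr ?_
    rw [map_mul, hd.coactS_det_map_t hqt, hd'.coactS_det_map_t hqt,
      Algebra.TensorProduct.tmul_mul_tmul, hq]
  · exact (IsUnit.of_mul_eq_one _ hd.det_map_t_mul_det_map_tinv).mul
      (IsUnit.of_mul_eq_one _ hd'.det_map_t_mul_det_map_tinv)
  · rw [← mul_assoc]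
    exact mul_mem (hd.tinv_mul_det_map_t_mem i j)
      (Matrix.det_mem_of_forall_mem fun i j => Algebra.subset_adjoin ⟨_, rfl⟩)

theorem exists_mem_invertibleCoinvariants_tinv_mul_mem (hqt : ∀ x : H, qt (F.t x) = hab.q x)
    (y : H) : ∃ m ∈ invertibleCoinvariants F qt,
      F.tinv y * m ∈ Algebra.adjoin k (Set.range F.t) := by
  obtain ⟨n, d, hd, hy⟩ := exists_isComatrix_mem_span (k := k) y
  obtain ⟨m, hm, hdm⟩ := hd.exists_mem_invertibleCoinvariants hqt
  refine ⟨m, hm, ?_⟩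
  suffices Submodule.span k (Set.range fun p : Fin n × Fin n => d p.1 p.2) ≤
      (Algebra.adjoin k (Set.range F.t)).toSubmodule.comap (LinearMap.mulRight k m ∘ₗ F.tinv) from
    this hy
  rw [Submodule.span_le]
  rintro _ ⟨p, rfl⟩
  exact hdm p.1 p.2

end FreeCommHopf

/-- `C_H`, the algebra of right `H_ab`-coinvariants of `S(t_H)_Θ`, is a localization
of the subalgebra `S(t_H)^{co-H_ab}` of right `H_ab`-coinvariants of `S(t_H)`. -/
theorem stmt_5 (k : Type*) [Field k] (H : Type*) [Ring H] [HopfAlgebra k H]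
    (A : Type*) [CommRing A] [HopfAlgebra k A] (F : FreeCommHopfData k H A)
    (Hab : Type*) [CommRing Hab] [HopfAlgebra k Hab] (hab : HabData k H Hab)
    (qt : A →ₐc[k] Hab) (hqt : ∀ x : H, qt (F.t x) = hab.q x) :
    IsLocalizationOfSet
      {a : A | a ∈ Algebra.adjoin k (Set.range F.t) ∧ a ∈ coinvCH qt}
      ((coinvCH qt : Subalgebra k A) : Set A) := by
  have generators : ∀ a ∈ Set.range F.t ∪ Set.range F.tinv, ∃ m ∈ invertibleCoinvariants F qt,
      a * m ∈ Algebra.adjoin k (Set.range F.t) := by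
    rintro _ (⟨y, rfl⟩ | ⟨y, rfl⟩)
    · exact ⟨1, one_mem _, by simpa using Algebra.subset_adjoin (Set.mem_range_self y)⟩
    · exact exists_mem_invertibleCoinvariants_tinv_mul_mem hqt y
  refine ⟨fun a ha => ha.2, invertibleCoinvariants F qt, fun m hm => hm.1, ?_, fun b hb => ?_⟩
  · rintro m ⟨⟨-, hm⟩, hunit⟩
    obtain ⟨u, hu⟩ := hunit.exists_right_inv
    exact ⟨u, AlgHom.mem_equalizer_of_mul_eq_one hm hu, hu⟩
  · have hb' : b ∈ Algebra.adjoin k (Set.range F.t ∪ Set.range F.tinv) := by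
      rw [F.adjoin_eq_top]
      exact Algebra.mem_top
    obtain ⟨m, hm, hbm⟩ := Algebra.exists_mul_mem_of_mem_adjoin
      (M := invertibleCoinvariants F qt) (fun m hm => hm.1.1) generators hb'
    exact ⟨m, hm, hbm, mul_mem hb hm.1.2⟩

end
end

section
/- Let H be a Hopf algebra over a field k. The elements p_x = t_{x_1} t_{S(x_2)} and q_{x,y} = t_{x_1} t_{y_1} t_{S(x_2 y_2)} of S(t_H), for all x, y ∈ H, belong to the image μ̄(V_H) of the coinvariant subalgebra V_H of the universal H-comodule algebra U_H; explicitly, the elements P_x = X_{x_1} X_{S(x_2)} and Q_{x,y} = X_{x_1} X_{y_1} X_{S(x_2 y_2)} of T(X_H) are right H-coinvariant and satisfy μ(P_x) = p_x ⊗ 1 and μ(Q_{x,y}) = q_{x,y} ⊗ 1. -/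
open TensorProduct

noncomputable section

variable {k : Type*} [Field k]

/-!
Work in convolution algebras of linear maps into `C ⊗ H`. There `x ↦ g x₁ ⊗ x₂` is the product of
`x ↦ g x ⊗ 1` and `x ↦ 1 ⊗ x`, and, the antipode being an anti-coalgebra map, its composite with
`S` is the product of `x ↦ 1 ⊗ S x` and `x ↦ g (S x) ⊗ 1`. Hence in
`δ(P_x) = δ(X_{x₁}) δ(X_{S x₂})` the two middle factors multiply to `1 ⊗ x₁ S x₂ = ε(x)`, leaving
`g x₁ g (S x₂) ⊗ 1`. For `Q_{x,y}` the same cancellation happens with `x ↦ 1 ⊗ x` replaced by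
`x ⊗ y ↦ 1 ⊗ x y`, which works because multiplication `H ⊗ H → H` is a coalgebra map. Both `δ_T`
and `μ` are algebra maps out of `T(X_H)` with `δ(X_x) = g x₁ ⊗ x₂`, for `g = X` and `g = t`.
-/

open WithConv
open Coalgebra (comul)
open scoped Coalgebra
open Algebra.TensorProduct (includeLeft includeRight)
open HopfAlgebra

section ConvolutionIntoTensorProduct

variable {R D A B : Type*} [CommSemiring R] [AddCommMonoid D] [Module R D] [Coalgebra R D]
  [Semiring A] [Algebra R A] [Semiring B] [Algebra R B]

lemma includeLeft_convMul_includeRight (u : D →ₗ[R] A) (v : D →ₗ[R] B) :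
    toConv (includeLeft.toLinearMap ∘ₗ u) * toConv (includeRight.toLinearMap ∘ₗ v) =
      toConv (map u v ∘ₗ comul) := by
  ext d
  simp [(ℛ R d).convMul_apply, ← (ℛ R d).eq]

lemma includeRight_convMul_includeLeft (u : D →ₗ[R] A) (v : D →ₗ[R] B) :
    toConv (includeRight.toLinearMap ∘ₗ v) * toConv (includeLeft.toLinearMap ∘ₗ u) =
      toConv (map u v ∘ₗ (TensorProduct.comm R D D).toLinearMap ∘ₗ comul) := by
  ext d
  simp [(ℛ R d).convMul_apply, ← (ℛ R d).eq]

lemma convMul_algHom_comp (h : A →ₐ[R] B) (f g : D →ₗ[R] A) :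
    toConv (h.toLinearMap ∘ₗ f) * toConv (h.toLinearMap ∘ₗ g) =
      toConv (h.toLinearMap ∘ₗ ofConv (toConv f * toConv g)) :=
  (congrArg toConv (LinearMap.algHom_comp_convMul_distrib h (toConv f) (toConv g))).symm

lemma toConv_algHom_comp_one (h : A →ₐ[R] B) :
    toConv (h.toLinearMap ∘ₗ ofConv (1 : WithConv (D →ₗ[R] A))) = 1 := by
  ext d
  simp

end ConvolutionIntoTensorProduct

section ConvolutionCoalgHom

variable {R D B A : Type*} [CommSemiring R] [AddCommMonoid D] [Module R D] [Coalgebra R D]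
  [AddCommMonoid B] [Module R B] [Coalgebra R B] [Semiring A] [Algebra R A]

lemma convMul_comp_coalgHom (f g : B →ₗ[R] A) (φ : D →ₗc[R] B) :
    toConv (f ∘ₗ φ.toLinearMap) * toConv (g ∘ₗ φ.toLinearMap) =
      toConv (ofConv (toConv f * toConv g) ∘ₗ φ.toLinearMap) :=
  (congrArg toConv (LinearMap.convMul_comp_coalgHom_distrib (toConv f) (toConv g) φ)).symm

lemma toConv_one_comp_coalgHom (φ : D →ₗc[R] B) :
    toConv (ofConv (1 : WithConv (B →ₗ[R] A)) ∘ₗ φ.toLinearMap) = 1 := by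
  ext d
  simp

end ConvolutionCoalgHom

namespace HopfAlgebra

variable {R D H : Type*} [CommSemiring R] [AddCommMonoid D] [Module R D] [Coalgebra R D]
  [Semiring H] [HopfAlgebra R H]

lemma comul_comp_antipode :
    comul ∘ₗ antipode R = map (antipode R) (antipode R) ∘ₗ
      (TensorProduct.comm R H H).toLinearMap ∘ₗ comul (R := R) (A := H) := by
  have hcomul : toConv (comul (R := R) (A := H)) =
      toConv (includeLeft.toLinearMap ∘ₗ LinearMap.id) *
        toConv (includeRight.toLinearMap ∘ₗ LinearMap.id) := by
    rw [includeLeft_convMul_includeRight, map_id, LinearMap.id_comp]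
  -- `Δ = (· ⊗ 1) * (1 ⊗ ·)` and `(S ⊗ S) ∘ τ ∘ Δ = (1 ⊗ S ·) * (S · ⊗ 1)`, so their product
  -- telescopes to `1`, and a left inverse of `Δ` equals its right inverse `Δ ∘ S`.
  have hleft : toConv (map (antipode R) (antipode R) ∘ₗ
      (TensorProduct.comm R H H).toLinearMap ∘ₗ comul (R := R) (A := H)) * toConv comul = 1 := by
    rw [← includeRight_convMul_includeLeft, hcomul, mul_assoc,
      ← mul_assoc (toConv (includeLeft.toLinearMap ∘ₗ antipode R)), convMul_algHom_comp,
      LinearMap.antipode_mul_id, toConv_algHom_comp_one, one_mul, convMul_algHom_comp,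
      LinearMap.antipode_mul_id, toConv_algHom_comp_one]
  exact congrArg ofConv (left_inv_eq_right_inv hleft LinearMap.comul_right_inv).symm

lemma convMul_antipode_comp_coalgHom (φ : D →ₗc[R] H) :
    toConv φ.toLinearMap * toConv (antipode R ∘ₗ φ.toLinearMap) = 1 :=
  calc _ = toConv (ofConv (toConv (LinearMap.id : H →ₗ[R] H) * toConv (antipode R)) ∘ₗ
          φ.toLinearMap) :=
        convMul_comp_coalgHom LinearMap.id (antipode R) φ
    _ = 1 := by rw [LinearMap.id_mul_antipode, toConv_one_comp_coalgHom]

end HopfAlgebra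

section RTensorComul

variable {R D C H : Type*} [CommSemiring R] [AddCommMonoid D] [Module R D] [Coalgebra R D]
  [Semiring C] [Algebra R C] [Semiring H] [HopfAlgebra R H]

lemma rTensor_comul_comp_antipode (g : H →ₗ[R] C) :
    g.rTensor H ∘ₗ comul ∘ₗ antipode R = ofConv (toConv (includeRight.toLinearMap ∘ₗ antipode R) *
      toConv (includeLeft.toLinearMap ∘ₗ g ∘ₗ antipode R)) := by
  rw [includeRight_convMul_includeLeft, comul_comp_antipode, ofConv_toConv,
    ← LinearMap.comp_assoc, LinearMap.rTensor_comp_map]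

lemma map_comul_convMul_rTensor_comul_antipode (u : D →ₗ[R] C) (φ : D →ₗc[R] H)
    (g : H →ₗ[R] C) :
    toConv (map u φ.toLinearMap ∘ₗ comul) *
        toConv (g.rTensor H ∘ₗ comul ∘ₗ antipode R ∘ₗ φ.toLinearMap) =
      toConv (includeLeft.toLinearMap ∘ₗ
        ofConv (toConv u * toConv (g ∘ₗ antipode R ∘ₗ φ.toLinearMap))) := by
  have hφ : toConv (includeRight.toLinearMap ∘ₗ φ.toLinearMap) *
      toConv (includeRight.toLinearMap ∘ₗ antipode R ∘ₗ φ.toLinearMap) =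
        (1 : WithConv (D →ₗ[R] C ⊗[R] H)) := by
    rw [convMul_algHom_comp, convMul_antipode_comp_coalgHom, toConv_algHom_comp_one]
  have hS : toConv (g.rTensor H ∘ₗ comul ∘ₗ antipode R ∘ₗ φ.toLinearMap) =
      toConv (includeRight.toLinearMap ∘ₗ antipode R ∘ₗ φ.toLinearMap) *
        toConv (includeLeft.toLinearMap ∘ₗ g ∘ₗ antipode R ∘ₗ φ.toLinearMap) := by
    change toConv ((g.rTensor H ∘ₗ comul ∘ₗ antipode R) ∘ₗ φ.toLinearMap) = _
    rw [rTensor_comul_comp_antipode]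
    exact (convMul_comp_coalgHom _ _ φ).symm
  rw [← includeLeft_convMul_includeRight, hS, ← mul_assoc,
    mul_assoc _ _ (toConv (includeRight.toLinearMap ∘ₗ antipode R ∘ₗ _)), hφ, mul_one,
    convMul_algHom_comp]

lemma ofConv_convMul_antipode_mul' (g : H →ₗ[R] C) (x y : H) :
    ofConv (toConv (LinearMap.mul' R C ∘ₗ map g g) *
      toConv (g ∘ₗ antipode R ∘ₗ LinearMap.mul' R H)) (x ⊗ₜ y) =
      LinearMap.mul' R C (map (LinearMap.mul' R C) LinearMap.id
        (map (map g g) (g ∘ₗ antipode R ∘ₗ LinearMap.mul' R H)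
          (tensorTensorTensorComm R H H H H (comul x ⊗ₜ comul y)))) := by
  rw [LinearMap.convMul_apply, comul_tmul, AlgebraTensorModule.tensorTensorTensorComm_eq,
    ← LinearMap.comp_apply (map (LinearMap.mul' R C) LinearMap.id), ← map_comp, LinearMap.id_comp]

end RTensorComul

section TensorAlgebra

variable {R C H : Type*} [CommSemiring R] [Semiring C] [Algebra R C] [Semiring H]
  [HopfAlgebra R H] (g : H →ₗ[R] C) (δ : TensorAlgebra R H →ₐ[R] C ⊗[R] H)
  (hδ : ∀ x, δ (TensorAlgebra.ι R x) = g.rTensor H (comul x))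
include hδ

lemma algHom_comp_convMul_ι_antipode :
    toConv (δ.toLinearMap ∘ₗ ofConv (toConv (TensorAlgebra.ι R) *
      toConv (TensorAlgebra.ι R ∘ₗ antipode R))) =
      toConv (includeLeft.toLinearMap ∘ₗ ofConv (toConv g * toConv (g ∘ₗ antipode R))) := by
  have hι : δ.toLinearMap ∘ₗ TensorAlgebra.ι R = g.rTensor H ∘ₗ comul := LinearMap.ext hδ
  rw [LinearMap.algHom_comp_convMul_distrib, toConv_ofConv, ← LinearMap.comp_assoc, hι]
  exact map_comul_convMul_rTensor_comul_antipode g (CoalgHom.id R H) g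

lemma algHom_comp_mul'_map_ι :
    δ.toLinearMap ∘ₗ LinearMap.mul' R _ ∘ₗ map (TensorAlgebra.ι R) (TensorAlgebra.ι R) =
      map (LinearMap.mul' R C ∘ₗ map g g) (Bialgebra.mulCoalgHom R H).toLinearMap ∘ₗ comul := by
  ext x y
  simp [hδ, ← (ℛ R x).eq, ← (ℛ R y).eq, Finset.sum_mul_sum, tmul_sum, sum_tmul,
    Finset.sum_comm (s := (ℛ R y).index)]

lemma algHom_comp_convMul_mul'_ι_antipode :
    toConv (δ.toLinearMap ∘ₗ
      ofConv (toConv (LinearMap.mul' R _ ∘ₗ map (TensorAlgebra.ι R) (TensorAlgebra.ι R)) *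
        toConv (TensorAlgebra.ι R ∘ₗ antipode R ∘ₗ LinearMap.mul' R H))) =
      toConv (includeLeft.toLinearMap ∘ₗ ofConv (toConv (LinearMap.mul' R C ∘ₗ map g g) *
        toConv (g ∘ₗ antipode R ∘ₗ LinearMap.mul' R H))) := by
  have hι : δ.toLinearMap ∘ₗ TensorAlgebra.ι R = g.rTensor H ∘ₗ comul := LinearMap.ext hδ
  rw [LinearMap.algHom_comp_convMul_distrib, toConv_ofConv, algHom_comp_mul'_map_ι g δ hδ,
    ← LinearMap.comp_assoc, hι]
  exact map_comul_convMul_rTensor_comul_antipode _ (Bialgebra.mulCoalgHom R H) g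

end TensorAlgebra

section Field

variable {C H : Type*} [Semiring C] [Algebra k C] [Ring H] [HopfAlgebra k H]
  (g : H →ₗ[k] C) (δ : TensorAlgebra k H →ₐ[k] C ⊗[k] H)
  (hδ : ∀ x, δ (TensorAlgebra.ι k x) = g.rTensor H (comul x))
include hδ

lemma map_PElem (x : H) :
    δ (PElem k x) = LinearMap.mul' k C (map g (g ∘ₗ antipode k) (comul x)) ⊗ₜ 1 :=
  congr(ofConv $(algHom_comp_convMul_ι_antipode g δ hδ) x)

lemma map_QElem (x y : H) :
    δ (QElem k x y) = LinearMap.mul' k C (map (LinearMap.mul' k C) LinearMap.id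
      (map (map g g) (g ∘ₗ antipode k ∘ₗ LinearMap.mul' k H)
        (tensorTensorTensorComm k H H H H (comul x ⊗ₜ comul y)))) ⊗ₜ 1 := by
  have h := congr(ofConv $(algHom_comp_convMul_mul'_ι_antipode g δ hδ) (x ⊗ₜ y))
  rwa [LinearMap.comp_apply, LinearMap.comp_apply, ofConv_convMul_antipode_mul',
    ofConv_convMul_antipode_mul'] at h

end Field

/-- The elements `P_x = X_{x₁} X_{S(x₂)}` and `Q_{x,y} = X_{x₁} X_{y₁} X_{S(x₂y₂)}`
of the tensor algebra `T(X_H)` are right `H`-coinvariant and satisfy `μ(P_x) = p_x ⊗ 1` and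
`μ(Q_{x,y}) = q_{x,y} ⊗ 1`; consequently `p_x` and `q_{x,y}` belong to `μ̄(V_H)`
(the set `VHSet F = {a | ∃ u, μ(u) = a ⊗ 1}`). -/
theorem stmt_14 (k : Type*) [Field k] (H : Type*) [Ring H] [HopfAlgebra k H]
    (A : Type*) [CommRing A] [HopfAlgebra k A] (F : FreeCommHopfData k H A) :
    (∀ x : H, coactT k H (PElem k x) = PElem k x ⊗ₜ[k] 1) ∧
    (∀ x y : H, coactT k H (QElem k x y) = QElem k x y ⊗ₜ[k] 1) ∧
    (∀ x : H, muMap F (PElem k x) = pMap F x ⊗ₜ[k] 1) ∧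
    (∀ x y : H, muMap F (QElem k x y) = qMap F (x ⊗ₜ[k] y) ⊗ₜ[k] 1) ∧
    (∀ x : H, pMap F x ∈ VHSet F) ∧
    (∀ x y : H, qMap F (x ⊗ₜ[k] y) ∈ VHSet F) := by
  have hT (x : H) : coactT k H (TensorAlgebra.ι k x) = (TensorAlgebra.ι k).rTensor H (comul x) :=
    TensorAlgebra.lift_ι_apply _ _
  have hμ (x : H) : muMap F (TensorAlgebra.ι k x) = F.t.rTensor H (comul x) :=
    TensorAlgebra.lift_ι_apply _ _
  have hP (x : H) : muMap F (PElem k x) = pMap F x ⊗ₜ 1 := map_PElem F.t (muMap F) hμ x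
  have hQ (x y : H) : muMap F (QElem k x y) = qMap F (x ⊗ₜ y) ⊗ₜ 1 :=
    map_QElem F.t (muMap F) hμ x y
  exact ⟨map_PElem _ _ hT, map_QElem _ _ hT, hP, hQ, fun x => ⟨_, hP x⟩,
    fun x y => ⟨_, hQ x y⟩⟩
end
end

section
/- Let H be a Hopf algebra over a field k, let W_H be the subalgebra of S(t_H)_Θ generated by the elements p_x = t_{x_1} t_{S(x_2)} and q_{x,y} = t_{x_1} t_{y_1} t_{S(x_2 y_2)} (x, y ∈ H), and let B_H be the generic base algebra. Then the Hopf ideal (W_H⁺) of S(t_H)_Θ generated by W_H⁺ = W_H ∩ ker ε coincides with the Hopf ideal (B_H⁺) generated by B_H⁺ = B_H ∩ ker ε. -/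
open TensorProduct

noncomputable section

variable {k : Type*} [Field k]

/-! Let `ψ` be an algebra map from `S(t_H)_Θ` to a commutative algebra `B`. The ideal generated
by the augmentation of a subalgebra lies in `ker ψ` iff `ψ` agrees with the counit on the
generators. Put `f = ψ ∘ t` and `g = ψ ∘ t⁻¹`: they are inverse to each other for convolution.
In the convolution monoids of linear maps `H → B` and `H ⊗ H → B`, the condition for `B_H` reads
`σ_{f,g} = 1` and `σ⁻¹_{f,g} = 1`, and the condition for `W_H` reads `p_f = 1` and `q_f = 1`.
Since `σ_{f,g} = (μ ∘ (f ⊗ f)) * (g ∘ μ)` and `g ∘ μ` is the inverse of `f ∘ μ`, each pair of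
conditions says that `f` is multiplicative. For `W_H`, `p_f = 1` says `f ∘ S = g`, which turns
`q_f` into `σ_{f,g}`; conversely a multiplicative `f` has convolution inverse `f ∘ S`. So both
ideals are the smallest ideal modulo which `t` becomes multiplicative. -/

open WithConv TensorProduct LinearMap

section Convolution

variable {R C D H B B' : Type*} [CommSemiring R]
  [AddCommMonoid C] [Module R C] [Coalgebra R C] [AddCommMonoid D] [Module R D] [Coalgebra R D]

section Semiring

variable [Semiring B] [Algebra R B] [Semiring B'] [Algebra R B']

theorem AlgHom.comp_ofConv_one (ψ : B →ₐ[R] B') :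
    ψ.toLinearMap ∘ₗ (1 : WithConv (C →ₗ[R] B)).ofConv = (1 : WithConv (C →ₗ[R] B')).ofConv := by
  ext x
  simp

variable [Semiring H] [Bialgebra R H]

theorem toConv_comp_mul'_mul_toConv_comp_mul' (f g : H →ₗ[R] B) :
    toConv (f ∘ₗ mul' R H) * toConv (g ∘ₗ mul' R H) =
      toConv ((toConv f * toConv g).ofConv ∘ₗ mul' R H) :=
  congrArg toConv (convMul_comp_coalgHom_distrib _ _ (Bialgebra.mulCoalgHom R H)).symm

theorem toConv_ofConv_one_comp_mul' :
    toConv ((1 : WithConv (H →ₗ[R] B)).ofConv ∘ₗ mul' R H) = 1 := by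
  ext x y
  simpa [Bialgebra.counit_mul] using Algebra.commutes _ _

end Semiring

section CommSemiring

variable [CommSemiring B] [Algebra R B]

theorem toConv_mul'_comp_map_mul (f f' : C →ₗ[R] B) (g g' : D →ₗ[R] B) :
    toConv (mul' R B ∘ₗ map f g) * toConv (mul' R B ∘ₗ map f' g') =
      toConv (mul' R B ∘ₗ map (toConv f * toConv f').ofConv (toConv g * toConv g').ofConv) := by
  have := algHom_comp_convMul_distrib (Algebra.TensorProduct.lmul' R (S := B))
    (toConv (map f g)) (toConv (map f' g'))
  rw [map_convMul_map] at this
  exact congrArg toConv this.symm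

theorem toConv_mul'_comp_map_ofConv_one :
    toConv (mul' R B ∘ₗ map (1 : WithConv (C →ₗ[R] B)).ofConv (1 : WithConv (D →ₗ[R] B)).ofConv)
      = 1 := by
  ext x y
  simp [mul_comm]

end CommSemiring

section Hopf

variable [Semiring H] [HopfAlgebra R H] [CommSemiring B] [Algebra R B]

-- The elements `p`, `σ`, `σ⁻¹`, `q` of the paper, with `t`, `t⁻¹` replaced by any `f`, `g`.
def pConv (f : H →ₗ[R] B) : WithConv (H →ₗ[R] B) :=
  toConv f * toConv (f ∘ₗ HopfAlgebra.antipode R)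

def sigmaConv (f g : H →ₗ[R] B) : WithConv (H ⊗[R] H →ₗ[R] B) :=
  toConv (mul' R B ∘ₗ map f f) * toConv (g ∘ₗ mul' R H)

def sigmaInvConv (f g : H →ₗ[R] B) : WithConv (H ⊗[R] H →ₗ[R] B) :=
  toConv (f ∘ₗ mul' R H) * toConv (mul' R B ∘ₗ map g g)

def qConv (f : H →ₗ[R] B) : WithConv (H ⊗[R] H →ₗ[R] B) :=
  sigmaConv f (f ∘ₗ HopfAlgebra.antipode R)

section Inverse

variable {f g : H →ₗ[R] B}

theorem sigmaConv_eq_one_iff (hfg : toConv f * toConv g = 1) (hgf : toConv g * toConv f = 1) :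
    sigmaConv f g = 1 ↔ mul' R B ∘ₗ map f f = f ∘ₗ mul' R H := by
  have hgf' : toConv (g ∘ₗ mul' R H) * toConv (f ∘ₗ mul' R H) = 1 := by
    rw [toConv_comp_mul'_mul_toConv_comp_mul', hgf, toConv_ofConv_one_comp_mul']
  have hfg' : toConv (f ∘ₗ mul' R H) * toConv (g ∘ₗ mul' R H) = 1 := by
    rw [toConv_comp_mul'_mul_toConv_comp_mul', hfg, toConv_ofConv_one_comp_mul']
  refine ⟨fun h => toConv_injective (left_inv_eq_right_inv h hgf'), fun h => ?_⟩
  rw [sigmaConv, h, hfg']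

theorem sigmaInvConv_eq_one_iff (hfg : toConv f * toConv g = 1) (hgf : toConv g * toConv f = 1) :
    sigmaInvConv f g = 1 ↔ mul' R B ∘ₗ map f f = f ∘ₗ mul' R H := by
  have hfg' : toConv (mul' R B ∘ₗ map f f) * toConv (mul' R B ∘ₗ map g g) = 1 := by
    rw [toConv_mul'_comp_map_mul, hfg, toConv_mul'_comp_map_ofConv_one]
  have hgf' : toConv (mul' R B ∘ₗ map g g) * toConv (mul' R B ∘ₗ map f f) = 1 := by
    rw [toConv_mul'_comp_map_mul, hgf, toConv_mul'_comp_map_ofConv_one]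
  refine ⟨fun h => toConv_injective (left_inv_eq_right_inv h hgf').symm, fun h => ?_⟩
  rw [sigmaInvConv, ← h, hfg']

theorem map_one_eq_one_of_mul'_comp_map (hmul : mul' R B ∘ₗ map f f = f ∘ₗ mul' R H)
    (hfg : toConv f * toConv g = 1) : f 1 = 1 := by
  have h1 : f 1 * g 1 = 1 := by
    simpa [Algebra.TensorProduct.one_def] using congr(($hfg).ofConv 1)
  have h2 : f 1 * f 1 = f 1 := by simpa using LinearMap.congr_fun hmul (1 ⊗ₜ 1)
  calc f 1 = f 1 * (f 1 * g 1) := by rw [h1, mul_one]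
    _ = f 1 * g 1 := by rw [← mul_assoc, h2]
    _ = 1 := h1

theorem AlgHom.toConv_comp_antipode_mul (φ : H →ₐ[R] B) :
    toConv (φ.toLinearMap ∘ₗ HopfAlgebra.antipode R) * toConv φ.toLinearMap = 1 := by
  have := algHom_comp_convMul_distrib φ (toConv (HopfAlgebra.antipode R)) (toConv LinearMap.id)
  rw [LinearMap.antipode_mul_id, AlgHom.comp_ofConv_one] at this
  exact (WithConv.ext this).symm

theorem comp_antipode_eq_of_mul'_comp_map (hmul : mul' R B ∘ₗ map f f = f ∘ₗ mul' R H)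
    (hfg : toConv f * toConv g = 1) : f ∘ₗ HopfAlgebra.antipode R = g := by
  let φ : H →ₐ[R] B := AlgHom.ofLinearMap f (map_one_eq_one_of_mul'_comp_map hmul hfg)
    fun x y => (LinearMap.congr_fun hmul (x ⊗ₜ y)).symm
  exact toConv_injective (left_inv_eq_right_inv (AlgHom.toConv_comp_antipode_mul φ) hfg)

theorem pConv_eq_one_and_qConv_eq_one_iff (hfg : toConv f * toConv g = 1)
    (hgf : toConv g * toConv f = 1) :
    pConv f = 1 ∧ qConv f = 1 ↔ mul' R B ∘ₗ map f f = f ∘ₗ mul' R H := by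
  constructor
  · rintro ⟨hp, hq⟩
    rw [qConv, ← toConv_injective (left_inv_eq_right_inv hgf hp)] at hq
    exact (sigmaConv_eq_one_iff hfg hgf).1 hq
  · intro hmul
    rw [pConv, qConv, comp_antipode_eq_of_mul'_comp_map hmul hfg]
    exact ⟨hfg, (sigmaConv_eq_one_iff hfg hgf).2 hmul⟩

end Inverse

section Naturality

variable [CommSemiring B'] [Algebra R B'] (ψ : B →ₐ[R] B') (f g : H →ₗ[R] B)

theorem AlgHom.comp_pConv :
    ψ.toLinearMap ∘ₗ (pConv f).ofConv = (pConv (ψ.toLinearMap ∘ₗ f)).ofConv := by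
  rw [pConv, pConv, algHom_comp_convMul_distrib, LinearMap.comp_assoc]

theorem AlgHom.comp_sigmaConv :
    ψ.toLinearMap ∘ₗ (sigmaConv f g).ofConv =
      (sigmaConv (ψ.toLinearMap ∘ₗ f) (ψ.toLinearMap ∘ₗ g)).ofConv := by
  simp only [sigmaConv, algHom_comp_convMul_distrib, ← LinearMap.comp_assoc, AlgHom.comp_mul']
  simp only [LinearMap.comp_assoc, ← map_comp]

theorem AlgHom.comp_sigmaInvConv :
    ψ.toLinearMap ∘ₗ (sigmaInvConv f g).ofConv =
      (sigmaInvConv (ψ.toLinearMap ∘ₗ f) (ψ.toLinearMap ∘ₗ g)).ofConv := by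
  simp only [sigmaInvConv, algHom_comp_convMul_distrib, ← LinearMap.comp_assoc, AlgHom.comp_mul']
  simp only [LinearMap.comp_assoc, ← map_comp]

theorem AlgHom.comp_qConv :
    ψ.toLinearMap ∘ₗ (qConv f).ofConv = (qConv (ψ.toLinearMap ∘ₗ f)).ofConv := by
  rw [qConv, qConv, AlgHom.comp_sigmaConv, LinearMap.comp_assoc]

end Naturality

section Counit

theorem mul'_comp_map_ofConv_one :
    mul' R B ∘ₗ map (1 : WithConv (H →ₗ[R] B)).ofConv (1 : WithConv (H →ₗ[R] B)).ofConv =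
      (1 : WithConv (H →ₗ[R] B)).ofConv ∘ₗ mul' R H := by
  ext x y
  simp [Bialgebra.counit_mul]

theorem pConv_ofConv_one_and_qConv_ofConv_one :
    pConv (1 : WithConv (H →ₗ[R] B)).ofConv = 1 ∧ qConv (1 : WithConv (H →ₗ[R] B)).ofConv = 1 :=
  (pConv_eq_one_and_qConv_eq_one_iff (one_mul 1) (one_mul 1)).2 mul'_comp_map_ofConv_one

theorem sigmaConv_ofConv_one :
    sigmaConv (1 : WithConv (H →ₗ[R] B)).ofConv (1 : WithConv (H →ₗ[R] B)).ofConv = 1 :=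
  (sigmaConv_eq_one_iff (one_mul 1) (one_mul 1)).2 mul'_comp_map_ofConv_one

theorem sigmaInvConv_ofConv_one :
    sigmaInvConv (1 : WithConv (H →ₗ[R] B)).ofConv (1 : WithConv (H →ₗ[R] B)).ofConv = 1 :=
  (sigmaInvConv_eq_one_iff (one_mul 1) (one_mul 1)).2 mul'_comp_map_ofConv_one

end Counit

end Hopf

end Convolution

section Augmentation

theorem Ideal.span_adjoin_inter_ker_le_ker_iff {R A B : Type*} [CommRing R] [CommRing A]
    [Algebra R A] [Ring B] [Algebra R B] (ε : A →ₐ[R] R) (S : Set A) (ψ : A →ₐ[R] B) :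
    Ideal.span {a | a ∈ Algebra.adjoin R S ∧ ε a = 0} ≤ RingHom.ker ψ ↔
      Set.EqOn ψ ((Algebra.ofId R B).comp ε) S := by
  rw [Ideal.span_le]
  constructor
  · intro h s hs
    have hmem : s - algebraMap R A (ε s) ∈ {a | a ∈ Algebra.adjoin R S ∧ ε a = 0} :=
      ⟨sub_mem (Algebra.subset_adjoin hs) (Subalgebra.algebraMap_mem _ _), by simp⟩
    simpa [sub_eq_zero] using h hmem
  · rintro h a ⟨ha, hε⟩
    have : S ⊆ AlgHom.equalizer ψ ((Algebra.ofId R B).comp ε) := h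
    simpa [hε] using Algebra.adjoin_le this ha

universe u

theorem Ideal.eq_of_forall_le_ker_iff {R : Type*} {A : Type u} [CommRing R] [CommRing A]
    [Algebra R A] {I J : Ideal A}
    (h : ∀ (B : Type u) [CommRing B] [Algebra R B] (ψ : A →ₐ[R] B),
      I ≤ RingHom.ker ψ ↔ J ≤ RingHom.ker ψ) : I = J := by
  apply le_antisymm
  · have hJ : RingHom.ker (Ideal.Quotient.mkₐ R J) = J := Ideal.Quotient.mkₐ_ker R J
    exact hJ ▸ (h _ (Ideal.Quotient.mkₐ R J)).2 hJ.ge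
  · have hI : RingHom.ker (Ideal.Quotient.mkₐ R I) = I := Ideal.Quotient.mkₐ_ker R I
    exact hI ▸ (h _ (Ideal.Quotient.mkₐ R I)).1 hI.ge

variable {R M N A B : Type*} [CommSemiring R] [AddCommMonoid M] [Module R M] [AddCommMonoid N]
  [Module R N] [Semiring A] [Algebra R A] [Semiring B] [Algebra R B] (ψ χ : A →ₐ[R] B)

theorem AlgHom.eqOn_setOf_exists_eq_iff (L : M →ₗ[R] A) :
    Set.EqOn ψ χ {a | ∃ x, a = L x} ↔ ψ.toLinearMap ∘ₗ L = χ.toLinearMap ∘ₗ L := by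
  simp [Set.EqOn, LinearMap.ext_iff]

theorem AlgHom.eqOn_setOf_exists_eq_tmul_iff (L : M ⊗[R] N →ₗ[R] A) :
    Set.EqOn ψ χ {a | ∃ x y, a = L (x ⊗ₜ y)} ↔ ψ.toLinearMap ∘ₗ L = χ.toLinearMap ∘ₗ L := by
  refine ⟨fun h => TensorProduct.ext' fun x y => h ⟨x, y, rfl⟩, ?_⟩
  rintro h _ ⟨x, y, rfl⟩
  exact LinearMap.congr_fun h (x ⊗ₜ y)

end Augmentation

section FreeCommHopfData

variable {H : Type*} [Ring H] [HopfAlgebra k H] {A : Type*} [CommRing A] [HopfAlgebra k A]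
  (F : FreeCommHopfData k H A) {B : Type*} [CommRing B] [Algebra k B]

namespace FreeCommHopfData

theorem toConv_t_mul_tinv : toConv F.t * toConv F.tinv = 1 := by
  ext x
  simp [F.mul_t_tinv, Algebra.algebraMap_eq_smul_one]

theorem toConv_tinv_mul_t : toConv F.tinv * toConv F.t = 1 := by
  ext x
  simp [F.mul_tinv_t, Algebra.algebraMap_eq_smul_one]

theorem toConv_comp_t_mul_comp_tinv (ψ : A →ₐ[k] B) :
    toConv (ψ.toLinearMap ∘ₗ F.t) * toConv (ψ.toLinearMap ∘ₗ F.tinv) = 1 := by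
  have := algHom_comp_convMul_distrib ψ (toConv F.t) (toConv F.tinv)
  rw [toConv_t_mul_tinv, AlgHom.comp_ofConv_one] at this
  exact (WithConv.ext this).symm

theorem toConv_comp_tinv_mul_comp_t (ψ : A →ₐ[k] B) :
    toConv (ψ.toLinearMap ∘ₗ F.tinv) * toConv (ψ.toLinearMap ∘ₗ F.t) = 1 := by
  have := algHom_comp_convMul_distrib ψ (toConv F.tinv) (toConv F.t)
  rw [toConv_tinv_mul_t, AlgHom.comp_ofConv_one] at this
  exact (WithConv.ext this).symm

theorem counit_comp_t :
    ((Algebra.ofId k B).comp (Bialgebra.counitAlgHom k A)).toLinearMap ∘ₗ F.t =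
      (1 : WithConv (H →ₗ[k] B)).ofConv := by
  ext x
  simp [F.counit_t]

theorem counit_comp_tinv :
    ((Algebra.ofId k B).comp (Bialgebra.counitAlgHom k A)).toLinearMap ∘ₗ F.tinv =
      (1 : WithConv (H →ₗ[k] B)).ofConv := by
  ext x
  simp [F.counit_tinv]

theorem pMap_eq : pMap F = (pConv F.t).ofConv := rfl

theorem qMap_eq : qMap F = (qConv F.t).ofConv := by
  ext x y
  simp [qMap, qConv, sigmaConv, map_map, LinearMap.comp_assoc,
    AlgebraTensorModule.tensorTensorTensorComm_eq]

theorem sigmaElem_eq (x y : H) : sigmaElem F x y = sigmaConv F.t F.tinv (x ⊗ₜ y) := by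
  simp [sigmaElem, sigmaConv, map_map, AlgebraTensorModule.tensorTensorTensorComm_eq]

theorem sigmaInvElem_eq (x y : H) : sigmaInvElem F x y = sigmaInvConv F.t F.tinv (x ⊗ₜ y) := by
  simp [sigmaInvElem, sigmaInvConv, map_map, AlgebraTensorModule.tensorTensorTensorComm_eq]

end FreeCommHopfData

theorem span_pq_augmentation_le_ker_iff (ψ : A →ₐ[k] B) :
    Ideal.span {a : A |
        a ∈ Algebra.adjoin k
          ({a | ∃ x : H, a = pMap F x} ∪ {a | ∃ x y : H, a = qMap F (x ⊗ₜ[k] y)}) ∧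
        Coalgebra.counit (R := k) a = 0} ≤ RingHom.ker ψ ↔
      mul' k B ∘ₗ map (ψ.toLinearMap ∘ₗ F.t) (ψ.toLinearMap ∘ₗ F.t) =
        (ψ.toLinearMap ∘ₗ F.t) ∘ₗ mul' k H := by
  refine (Ideal.span_adjoin_inter_ker_le_ker_iff (Bialgebra.counitAlgHom k A) _ ψ).trans ?_
  rw [Set.eqOn_union, AlgHom.eqOn_setOf_exists_eq_iff, AlgHom.eqOn_setOf_exists_eq_tmul_iff,
    F.pMap_eq, F.qMap_eq, AlgHom.comp_pConv, AlgHom.comp_pConv, AlgHom.comp_qConv,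
    AlgHom.comp_qConv, F.counit_comp_t]
  simp only [← WithConv.ext_iff]
  rw [pConv_ofConv_one_and_qConv_ofConv_one.1, pConv_ofConv_one_and_qConv_ofConv_one.2]
  exact pConv_eq_one_and_qConv_eq_one_iff (F.toConv_comp_t_mul_comp_tinv ψ)
    (F.toConv_comp_tinv_mul_comp_t ψ)

theorem span_genericBase_augmentation_le_ker_iff (ψ : A →ₐ[k] B) :
    Ideal.span {a : A | a ∈ genericBase F ∧ Coalgebra.counit (R := k) a = 0} ≤ RingHom.ker ψ ↔
      mul' k B ∘ₗ map (ψ.toLinearMap ∘ₗ F.t) (ψ.toLinearMap ∘ₗ F.t) =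
        (ψ.toLinearMap ∘ₗ F.t) ∘ₗ mul' k H := by
  refine (Ideal.span_adjoin_inter_ker_le_ker_iff (Bialgebra.counitAlgHom k A) _ ψ).trans ?_
  simp only [F.sigmaElem_eq, F.sigmaInvElem_eq]
  rw [Set.eqOn_union, AlgHom.eqOn_setOf_exists_eq_tmul_iff, AlgHom.eqOn_setOf_exists_eq_tmul_iff,
    AlgHom.comp_sigmaConv, AlgHom.comp_sigmaConv, AlgHom.comp_sigmaInvConv,
    AlgHom.comp_sigmaInvConv, F.counit_comp_t, F.counit_comp_tinv]
  simp only [← WithConv.ext_iff]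
  rw [sigmaConv_ofConv_one, sigmaInvConv_ofConv_one,
    sigmaConv_eq_one_iff (F.toConv_comp_t_mul_comp_tinv ψ) (F.toConv_comp_tinv_mul_comp_t ψ),
    sigmaInvConv_eq_one_iff (F.toConv_comp_t_mul_comp_tinv ψ) (F.toConv_comp_tinv_mul_comp_t ψ),
    and_self]

end FreeCommHopfData

/-- The Hopf ideal of `S(t_H)_Θ` generated by `W_H⁺ = W_H ∩ ker ε` coincides with
the Hopf ideal generated by `B_H⁺ = B_H ∩ ker ε`, where `W_H` is the subalgebra generated by the
elements `p_x` and `q_{x,y}` and `B_H` is the generic base algebra. -/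
theorem stmt_16 (k : Type*) [Field k] (H : Type*) [Ring H] [HopfAlgebra k H]
    (A : Type*) [CommRing A] [HopfAlgebra k A] (F : FreeCommHopfData k H A) :
    Ideal.span {a : A |
        a ∈ Algebra.adjoin k
          ({a | ∃ x : H, a = pMap F x} ∪ {a | ∃ x y : H, a = qMap F (x ⊗ₜ[k] y)}) ∧
        Coalgebra.counit (R := k) a = 0} =
    Ideal.span {a : A | a ∈ genericBase F ∧ Coalgebra.counit (R := k) a = 0} :=
  Ideal.eq_of_forall_le_ker_iff fun _ _ _ ψ =>
    (span_pq_augmentation_le_ker_iff F ψ).trans (span_genericBase_augmentation_le_ker_iff F ψ).symm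

end
end
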